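/- arXiv:math/0506564 — 3 statements merged into one kernel-verified Lean document; each statement's English description precedes it below -/
import Mathlib

section
/- Let P = [Q, v] be a pyramid with apex v over an (n−1)-polytope base Q, where v is not in the affine hull of Q. If two triangulations αQ and βQ of Q are equivalent by elementary moves, then the induced triangulations [αQ, v] and [βQ, v] of P (obtained by coning each simplex of the triangulation of Q to v) are equivalent by elementary moves. -/
open Set MeasureTheory
open scoped Classical
noncomputable section

/-- Ambient Euclidean space `ℝ^N`. -/
abbrev Euc (N : ℕ) := EuclideanSpace ℝ (Fin N)

/-- `s` is an `n`-simplex: the convex hull of `n+1` affinely independent points. -/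
def IsSimplex {N : ℕ} (n : ℕ) (s : Set (Euc N)) : Prop :=
  ∃ v : Fin (n + 1) → Euc N, AffineIndependent ℝ v ∧ s = convexHull ℝ (Set.range v)

/-- The (affine) dimension of a set: the rank of its vector span. -/
def sdim {N : ℕ} (s : Set (Euc N)) : ℕ := Module.finrank ℝ (vectorSpan ℝ s)

/-- A polytope: the compact convex hull of finitely many points (nonempty). -/
def IsPolytope {N : ℕ} (s : Set (Euc N)) : Prop :=
  ∃ t : Finset (Euc N), t.Nonempty ∧ s = convexHull ℝ (t : Set (Euc N))

/-- An `n`-polyhedron: a finite union of `n`-dimensional polytopes. -/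
def IsPolyhedron {N : ℕ} (n : ℕ) (P : Set (Euc N)) : Prop :=
  ∃ F : Finset (Set (Euc N)), F.Nonempty ∧ (∀ Q ∈ F, IsPolytope Q ∧ sdim Q = n) ∧
    (⋃ Q ∈ F, Q) = P

/-- A triangulation of the `n`-dimensional set `P`: a finite set of `n`-simplices with
union `P`, any two distinct ones intersecting in a set of dimension less than `n`. -/
def IsTriangulation {N : ℕ} (n : ℕ) (P : Set (Euc N)) (F : Finset (Set (Euc N))) : Prop :=
  (∀ T ∈ F, IsSimplex n T) ∧ (⋃ T ∈ F, T) = P ∧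
    ∀ S ∈ F, ∀ T ∈ F, S ≠ T → sdim (S ∩ T) < n

/-- A starring of `P` at `a`: a triangulation all of whose simplices have a vertex at `a`. -/
def IsStarring {N : ℕ} (n : ℕ) (P : Set (Euc N)) (a : Euc N) (F : Finset (Set (Euc N))) : Prop :=
  IsTriangulation n P F ∧
    ∀ T ∈ F, ∃ v : Fin (n + 1) → Euc N, AffineIndependent ℝ v ∧
      T = convexHull ℝ (Set.range v) ∧ a ∈ Set.range v

/-- `T` is dissected into the two `n`-simplices `T₁, T₂` by a hyperplane containing an
`(n-2)`-dimensional face of `T`. -/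
def IsDissection {N : ℕ} (n : ℕ) (T T₁ T₂ : Set (Euc N)) : Prop :=
  IsSimplex n T₁ ∧ IsSimplex n T₂ ∧ T₁ ∪ T₂ = T ∧ T₁ ≠ T₂ ∧
  ∃ (f : Euc N →ₗ[ℝ] ℝ) (c : ℝ), f ≠ 0 ∧
    T₁ = T ∩ {x | f x ≤ c} ∧ T₂ = T ∩ {x | c ≤ f x} ∧
    ∃ v : Fin (n + 1) → Euc N, AffineIndependent ℝ v ∧ T = convexHull ℝ (Set.range v) ∧
      ∃ s : Finset (Fin (n + 1)), s.card = n - 1 ∧ ∀ i ∈ s, f (v i) = c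

/-- An elementary move: dissect one simplex of the triangulation into two `n`-simplices by a
hyperplane containing an `(n-2)`-face, or merge two simplices whose union is again a simplex. -/
def ElemMove {N : ℕ} (n : ℕ) (F G : Finset (Set (Euc N))) : Prop :=
  (∃ T ∈ F, ∃ T₁ T₂, IsDissection n T T₁ T₂ ∧ G = insert T₁ (insert T₂ (F.erase T))) ∨
  (∃ T₁ ∈ F, ∃ T₂ ∈ F, T₁ ≠ T₂ ∧ IsSimplex n (T₁ ∪ T₂) ∧
    G = insert (T₁ ∪ T₂) ((F.erase T₁).erase T₂))

/-- Equivalence by finitely many elementary moves. -/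
def MoveEquiv {N : ℕ} (n : ℕ) (F G : Finset (Set (Euc N))) : Prop :=
  Relation.ReflTransGen (ElemMove n) F G

/-- `μ` is a valuation on the class `S` of sets. -/
def IsValuation {N : ℕ} (S : Set (Set (Euc N))) (μ : Set (Euc N) → ℝ) : Prop :=
  μ ∅ = 0 ∧ ∀ A ∈ S, ∀ B ∈ S, A ∪ B ∈ S → A ∩ B ∈ S →
    μ A + μ B = μ (A ∪ B) + μ (A ∩ B)

/-- `𝒯ⁿ`: simplices of dimension at most `n` (together with `∅`). -/
def simplexClass (N n : ℕ) : Set (Set (Euc N)) :=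
  {s | s = ∅ ∨ ∃ k ≤ n, IsSimplex k s}

/-- `𝒫ⁿ`: polytopes of dimension at most `n` (together with `∅`). -/
def polytopeClass (N n : ℕ) : Set (Set (Euc N)) :=
  {s | s = ∅ ∨ (IsPolytope s ∧ sdim s ≤ n)}

/-- `𝒬ⁿ`: polyhedra (finite unions of polytopes) of dimension at most `n` (with `∅`). -/
def polyhedronClass (N n : ℕ) : Set (Set (Euc N)) :=
  {s | s = ∅ ∨ ((∃ F : Finset (Set (Euc N)), F.Nonempty ∧ (∀ Q ∈ F, IsPolytope Q) ∧
      (⋃ Q ∈ F, Q) = s) ∧ sdim s ≤ n)}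

/-!
Coning to an apex `v` outside an affine subspace `A` is injective on convex subsets of `A`
(since `[S, v] ∩ A = S`), commutes with unions, and commutes with cutting by a hyperplane through
`v`. A hyperplane cutting a simplex of `A` can be replaced by one through `v` with the same trace
on `A`; the cut then cones to a cut of the pyramid whose `(n-2)`-face is the old `(n-3)`-face
together with `v`. Hence every elementary move of the base cones to an elementary move of the
pyramid.
-/

/-- The cone `[S, v]` over `S` with apex `v`. -/
def cone {E : Type*} [AddCommGroup E] [Module ℝ E] (v : E) (S : Set E) : Set E :=
  convexHull ℝ ({v} ∪ S)

section Cone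

variable {E : Type*} [AddCommGroup E] [Module ℝ E] {v : E} {S T : Set E}

theorem cone_eq_convexJoin (hS : Convex ℝ S) (hSne : S.Nonempty) :
    cone v S = convexJoin ℝ {v} S := by
  rw [cone, singleton_union, convexHull_insert hSne, hS.convexHull_eq]

theorem mem_cone_iff (hS : Convex ℝ S) (hSne : S.Nonempty) {x : E} :
    x ∈ cone v S ↔ ∃ q ∈ S, x ∈ segment ℝ v q := by
  simp only [cone_eq_convexJoin hS hSne, convexJoin_singleton_left, mem_iUnion, exists_prop]

theorem cone_union (hS : Convex ℝ S) (hT : Convex ℝ T) (hST : Convex ℝ (S ∪ T))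
    (hSne : S.Nonempty) (hTne : T.Nonempty) : cone v (S ∪ T) = cone v S ∪ cone v T := by
  rw [cone_eq_convexJoin hST (hSne.mono subset_union_left), cone_eq_convexJoin hS hSne,
    cone_eq_convexJoin hT hTne, convexJoin_union_right]

theorem cone_inter_of_subset {A : AffineSubspace ℝ E} (hv : v ∉ A) (hSA : S ⊆ A)
    (hS : Convex ℝ S) (hSne : S.Nonempty) : cone v S ∩ A = S := by
  refine Subset.antisymm ?_ fun q hq => ⟨subset_convexHull ℝ _ (Or.inr hq), hSA hq⟩
  rintro x ⟨hx, hxA⟩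
  obtain ⟨q, hq, hxq⟩ := (mem_cone_iff hS hSne).1 hx
  obtain rfl | hqx := eq_or_ne q x
  · exact hq
  refine absurd ?_ hv
  exact affineSpan_pair_le_of_mem_of_mem (hSA hq) hxA
    ((mem_segment_iff_wbtw.1 hxq).left_mem_affineSpan_of_right_ne hqx)

theorem cone_injOn {A : AffineSubspace ℝ E} (hv : v ∉ A) :
    InjOn (cone v) {S | Convex ℝ S ∧ S.Nonempty ∧ S ⊆ A} := by
  rintro S ⟨hS, hSne, hSA⟩ T ⟨hT, hTne, hTA⟩ hST
  rw [← cone_inter_of_subset hv hSA hS hSne, hST, cone_inter_of_subset hv hTA hT hTne]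

theorem cone_inter_halfSpace_le (g : E →ₗ[ℝ] ℝ) (hS : Convex ℝ S)
    (hne : (S ∩ {x | g x ≤ g v}).Nonempty) :
    cone v (S ∩ {x | g x ≤ g v}) = cone v S ∩ {x | g x ≤ g v} := by
  have hH : Convex ℝ {x | g x ≤ g v} := convex_halfSpace_le g.isLinear _
  ext x
  rw [mem_inter_iff, mem_cone_iff (hS.inter hH) hne, mem_cone_iff hS (hne.mono inter_subset_left)]
  constructor
  · rintro ⟨q, ⟨hqS, hqH⟩, hxq⟩
    exact ⟨⟨q, hqS, hxq⟩, hH.segment_subset (le_refl (g v)) hqH hxq⟩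
  · rintro ⟨⟨q, hqS, a, b, ha, hb, hab, rfl⟩, hx⟩
    by_cases hq : g q ≤ g v
    · exact ⟨q, ⟨hqS, hq⟩, a, b, ha, hb, hab, rfl⟩
    -- `g` is affine along the segment and `g v < g q`, so `g x ≤ g v` forces `x = v`
    have hb0 : b = 0 := by
      change g (a • v + b • q) ≤ g v at hx
      rw [map_add, map_smul, map_smul, smul_eq_mul, smul_eq_mul] at hx
      obtain rfl : a = 1 - b := by linarith
      by_contra hb0
      nlinarith [mul_pos (lt_of_le_of_ne hb (Ne.symm hb0)) (sub_pos.2 (not_le.1 hq))]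
    obtain ⟨q', hq'⟩ := hne
    refine ⟨q', hq', ?_⟩
    rw [hb0, zero_smul, add_zero, show a = 1 by linarith, one_smul]
    exact left_mem_segment ℝ v q'

theorem cone_inter_halfSpace_ge (g : E →ₗ[ℝ] ℝ) (hS : Convex ℝ S)
    (hne : (S ∩ {x | g v ≤ g x}).Nonempty) :
    cone v (S ∩ {x | g v ≤ g x}) = cone v S ∩ {x | g v ≤ g x} := by
  simpa only [LinearMap.neg_apply, neg_le_neg_iff] using cone_inter_halfSpace_le (-g) hS
    (by simpa only [LinearMap.neg_apply, neg_le_neg_iff] using hne)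

theorem cone_convexHull_range {n : ℕ} (v : E) (u : Fin n → E) :
    cone v (convexHull ℝ (range u)) = convexHull ℝ (range (Fin.cons v u : Fin (n + 1) → E)) := by
  rw [cone, convexHull_convexHull_union_right, Fin.range_cons, singleton_union]

end Cone

theorem exists_linearMap_sub_eq_of_notMem {E : Type*} [AddCommGroup E] [Module ℝ E]
    {A : AffineSubspace ℝ E} {v : E} (hv : v ∉ A) (hA : (A : Set E).Nonempty)
    (f : E →ₗ[ℝ] ℝ) (c : ℝ) : ∃ g : E →ₗ[ℝ] ℝ, ∀ q ∈ A, g q - g v = f q - c := by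
  obtain ⟨p, hp⟩ := hA
  have hvp : v - p ∉ A.direction := fun h => hv (by
    simpa using AffineSubspace.vadd_mem_of_mem_direction h hp)
  obtain ⟨φ, hφv, hφA⟩ := Submodule.exists_dual_map_eq_bot_of_notMem hvp inferInstance
  have hφ : ∀ q ∈ A, φ q = φ p := fun q hq => by
    have := Submodule.mem_map_of_mem (f := φ) (AffineSubspace.vsub_mem_direction hq hp)
    rwa [hφA, Submodule.mem_bot, vsub_eq_sub, map_sub, sub_eq_zero] at this
  -- add a multiple of `φ`, constant on `A`, to shift the value at `v`
  refine ⟨f + ((c - f v) / φ (v - p)) • φ, fun q hq => ?_⟩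
  simp only [LinearMap.add_apply, LinearMap.smul_apply, smul_eq_mul]
  rw [map_sub] at hφv ⊢
  rw [hφ q hq]
  field_simp
  ring

theorem AffineIndependent.fin_cons {k P V : Type*} [DivisionRing k] [AddCommGroup V] [Module k V]
    [AddTorsor V P] {n : ℕ} {u : Fin n → P} (hu : AffineIndependent k u) {v : P}
    (hv : v ∉ affineSpan k (range u)) : AffineIndependent k (Fin.cons v u : Fin (n + 1) → P) := by
  refine AffineIndependent.affineIndependent_of_notMem_span (i := 0) ?_ ?_
  · rw [← affineIndependent_equiv (finSuccAboveEquiv 0)]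
    convert hu using 1
    funext i
    simp [finSuccAboveEquiv_apply]
  · rw [Fin.cons_zero, show {x : Fin (n + 1) | x ≠ 0} = {0}ᶜ from rfl, ← Fin.range_succ,
      ← range_comp, Fin.cons_comp_succ]
    exact hv

theorem Finset.image_erase_of_injOn {α β : Type*} [DecidableEq α] [DecidableEq β] {f : α → β}
    {s : Finset α} (hf : InjOn f s) {a : α} (ha : a ∈ s) :
    (s.erase a).image f = (s.image f).erase (f a) := by
  ext b
  simp only [Finset.mem_image, Finset.mem_erase]
  constructor
  · rintro ⟨x, ⟨hxa, hx⟩, rfl⟩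
    exact ⟨hf.ne hx ha hxa, x, hx, rfl⟩
  · rintro ⟨hb, x, hx, rfl⟩
    exact ⟨x, ⟨fun hxa => hb (hxa ▸ rfl), hx⟩, rfl⟩

theorem exists_card_eq_forall_fin_cons {α : Type*} {p : α → Prop} {m : ℕ} {u : Fin (m + 1) → α}
    {v : α} (hv : p v) {s : Finset (Fin (m + 1))} (hs : s.card = m - 1)
    (hsu : ∀ i ∈ s, p (u i)) :
    ∃ s' : Finset (Fin (m + 2)), s'.card = m ∧
      ∀ i ∈ s', p ((Fin.cons v u : Fin (m + 2) → α) i) := by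
  let t := Finset.cons 0 (s.map (Fin.succEmb _)) (by simp)
  have ht : ∀ i ∈ t, p ((Fin.cons v u : Fin (m + 2) → α) i) := by
    simp only [t, Finset.forall_mem_cons, Fin.cons_zero, Finset.forall_mem_map,
      Fin.coe_succEmb, Fin.cons_succ]
    exact ⟨hv, hsu⟩
  obtain ⟨s', hs't, hs'⟩ := Finset.exists_subset_card_eq (s := t) (n := m)
    (by simp only [t, Finset.card_cons, Finset.card_map, hs]; omega)
  exact ⟨s', hs', fun i hi => ht i (hs't hi)⟩

section Simplex

variable {N m : ℕ} {A : AffineSubspace ℝ (Euc N)} {v : Euc N} {S T T₁ T₂ : Set (Euc N)}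

theorem IsSimplex.convex (h : IsSimplex m S) : Convex ℝ S := by
  obtain ⟨u, -, rfl⟩ := h
  exact convex_convexHull ℝ _

theorem IsSimplex.nonempty (h : IsSimplex m S) : S.Nonempty := by
  obtain ⟨u, -, rfl⟩ := h
  exact (range_nonempty u).convexHull

theorem IsSimplex.cone (hv : v ∉ A) (hSA : S ⊆ A) (h : IsSimplex m S) :
    IsSimplex (m + 1) (cone v S) := by
  obtain ⟨u, hu, rfl⟩ := h
  exact ⟨Fin.cons v u, hu.fin_cons fun hvu =>
    hv (affineSpan_le.2 ((subset_convexHull ℝ _).trans hSA) hvu), cone_convexHull_range v u⟩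

theorem IsDissection.left_subset (h : IsDissection m T T₁ T₂) : T₁ ⊆ T :=
  h.2.2.1 ▸ subset_union_left

theorem IsDissection.right_subset (h : IsDissection m T T₁ T₂) : T₂ ⊆ T :=
  h.2.2.1 ▸ subset_union_right

theorem IsDissection.cone (hv : v ∉ A) (hTA : T ⊆ A) (h : IsDissection m T T₁ T₂) :
    IsDissection (m + 1) (cone v T) (cone v T₁) (cone v T₂) := by
  have h₁A := h.left_subset.trans hTA
  have h₂A := h.right_subset.trans hTA
  obtain ⟨h₁, h₂, hunion, hne, f, c, -, hT₁, hT₂, u, hu, hT, s, hs, hsu⟩ := h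
  have hTconv : Convex ℝ T := hT ▸ convex_convexHull ℝ _
  -- the cut hyperplane `f = c` meets `A` in the same set as a hyperplane `g = g v` through `v`
  obtain ⟨g, hg⟩ := exists_linearMap_sub_eq_of_notMem hv (h₁.nonempty.mono h₁A) f c
  have hT₁g : T₁ = T ∩ {x | g x ≤ g v} := hT₁.trans <| Set.ext fun x =>
    and_congr_right fun hx => by
      have := hg x (hTA hx)
      show f x ≤ c ↔ g x ≤ g v
      constructor <;> intro <;> linarith
  have hT₂g : T₂ = T ∩ {x | g v ≤ g x} := hT₂.trans <| Set.ext fun x =>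
    and_congr_right fun hx => by
      have := hg x (hTA hx)
      show c ≤ f x ↔ g v ≤ g x
      constructor <;> intro <;> linarith
  have hg0 : g ≠ 0 := by
    rintro rfl
    exact hne (by simp [hT₁g, hT₂g])
  refine ⟨h₁.cone hv h₁A, h₂.cone hv h₂A, ?_, ?_, g, g v, hg0, ?_, ?_, Fin.cons v u,
    hu.fin_cons fun hvu => hv (affineSpan_le.2 ((subset_convexHull ℝ _).trans (hT ▸ hTA)) hvu),
    hT ▸ cone_convexHull_range v u, ?_⟩
  · rw [← cone_union h₁.convex h₂.convex (hunion ▸ hTconv) h₁.nonempty h₂.nonempty, hunion]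
  · exact fun h => hne (cone_injOn hv ⟨h₁.convex, h₁.nonempty, h₁A⟩ ⟨h₂.convex, h₂.nonempty, h₂A⟩ h)
  · rw [hT₁g, cone_inter_halfSpace_le g hTconv (hT₁g ▸ h₁.nonempty)]
  · rw [hT₂g, cone_inter_halfSpace_ge g hTconv (hT₂g ▸ h₂.nonempty)]
  · simpa using exists_card_eq_forall_fin_cons (p := fun x => g x = g v) rfl hs fun i hi => by
      have := hg (u i) (hTA (hT ▸ subset_convexHull ℝ _ (mem_range_self i)))
      linarith [hsu i hi]

end Simplex

section Moves

variable {N m : ℕ} {v : Euc N} {F G : Finset (Set (Euc N))}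

theorem ElemMove.forall_isSimplex_subset {A : Set (Euc N)}
    (hF : ∀ T ∈ F, IsSimplex m T ∧ T ⊆ A) (h : ElemMove m F G) :
    ∀ T ∈ G, IsSimplex m T ∧ T ⊆ A := by
  rcases h with ⟨T, hT, T₁, T₂, hd, rfl⟩ | ⟨T₁, h₁, T₂, h₂, -, hU, rfl⟩
  · simp only [Finset.mem_insert]
    rintro S (rfl | rfl | hS)
    · exact ⟨hd.1, hd.left_subset.trans (hF T hT).2⟩
    · exact ⟨hd.2.1, hd.right_subset.trans (hF T hT).2⟩
    · exact hF S (Finset.mem_of_mem_erase hS)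
  · simp only [Finset.mem_insert]
    rintro S (rfl | hS)
    · exact ⟨hU, union_subset (hF T₁ h₁).2 (hF T₂ h₂).2⟩
    · exact hF S (Finset.mem_of_mem_erase (Finset.mem_of_mem_erase hS))

theorem ElemMove.image_cone {A : AffineSubspace ℝ (Euc N)} (hv : v ∉ A)
    (hF : ∀ T ∈ F, IsSimplex m T ∧ T ⊆ A) (h : ElemMove m F G) :
    ElemMove (m + 1) (F.image (cone v)) (G.image (cone v)) := by
  have hinj : InjOn (cone v) F := (cone_injOn hv).mono fun T hT => by
    exact ⟨(hF T hT).1.convex, (hF T hT).1.nonempty, (hF T hT).2⟩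
  rcases h with ⟨T, hT, T₁, T₂, hd, rfl⟩ | ⟨T₁, h₁, T₂, h₂, hne, hU, rfl⟩
  · refine Or.inl ⟨cone v T, Finset.mem_image_of_mem _ hT, cone v T₁, cone v T₂,
      hd.cone hv (hF T hT).2, ?_⟩
    rw [Finset.image_insert, Finset.image_insert, Finset.image_erase_of_injOn hinj hT]
  · have hcone : cone v (T₁ ∪ T₂) = cone v T₁ ∪ cone v T₂ :=
      cone_union (hF T₁ h₁).1.convex (hF T₂ h₂).1.convex hU.convex (hF T₁ h₁).1.nonempty
        (hF T₂ h₂).1.nonempty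
    refine Or.inr ⟨cone v T₁, Finset.mem_image_of_mem _ h₁, cone v T₂,
      Finset.mem_image_of_mem _ h₂, hinj.ne h₁ h₂ hne, ?_, ?_⟩
    · exact hcone ▸ hU.cone hv (union_subset (hF T₁ h₁).2 (hF T₂ h₂).2)
    · rw [Finset.image_insert, hcone,
        Finset.image_erase_of_injOn (hinj.mono (Finset.erase_subset _ _))
          (Finset.mem_erase.2 ⟨hne.symm, h₂⟩),
        Finset.image_erase_of_injOn hinj h₁]

theorem MoveEquiv.image_cone {A : AffineSubspace ℝ (Euc N)} (hv : v ∉ A)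
    (hF : ∀ T ∈ F, IsSimplex m T ∧ T ⊆ A) (h : MoveEquiv m F G) :
    MoveEquiv (m + 1) (F.image (cone v)) (G.image (cone v)) := by
  suffices MoveEquiv (m + 1) (F.image (cone v)) (G.image (cone v)) ∧
      ∀ T ∈ G, IsSimplex m T ∧ T ⊆ A from this.1
  induction h with
  | refl => exact ⟨.refl, hF⟩
  | tail _ hstep ih =>
    exact ⟨ih.1.tail (hstep.image_cone hv ih.2), hstep.forall_isSimplex_subset ih.2⟩

end Moves

theorem pyramid_cone_equiv_general {N n : ℕ} (hn : 1 ≤ n) (Q : Set (Euc N))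
    (v : Euc N) (hv : v ∉ affineSpan ℝ Q)
    (α β : Finset (Set (Euc N)))
    (hα : IsTriangulation (n - 1) Q α)
    (h : MoveEquiv (n - 1) α β) :
    MoveEquiv n (α.image fun S => convexHull ℝ ({v} ∪ S))
      (β.image fun S => convexHull ℝ ({v} ∪ S)) := by
  obtain ⟨m, rfl⟩ : ∃ m, n = m + 1 := ⟨n - 1, by omega⟩
  rw [Nat.add_sub_cancel] at hα h
  refine h.image_cone hv fun T hT => ⟨hα.1 T hT, ?_⟩
  exact (hα.2.1 ▸ subset_biUnion_of_mem hT).trans (subset_affineSpan ℝ Q)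

/-- coning equivalent triangulations of the base of a pyramid to the apex
yields equivalent triangulations of the pyramid. -/
theorem pyramid_cone_equiv {N n : ℕ} (hn : 1 ≤ n) (Q : Set (Euc N)) (hQ : IsPolytope Q)
    (hdimQ : sdim Q = n - 1) (v : Euc N) (hv : v ∉ affineSpan ℝ Q)
    (α β : Finset (Set (Euc N)))
    (hα : IsTriangulation (n - 1) Q α) (hβ : IsTriangulation (n - 1) Q β)
    (h : MoveEquiv (n - 1) α β) :
    MoveEquiv n (α.image fun S => convexHull ℝ ({v} ∪ S))
      (β.image fun S => convexHull ℝ ({v} ∪ S)) :=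
  pyramid_cone_equiv_general hn Q v hv α β hα h
end
end

section
/- If μ₁ and μ₂ are valuations on the set P^n of polytopes of dimension at most n in R^N that agree on all simplices of dimension at most n, then μ₁ = μ₂ on P^n. -/
open Set MeasureTheory
open scoped Classical
noncomputable section

/-
A polytope `conv t` whose spanning set `t` is affinely dependent carries a relation
`∑ w y • y = 0`, `∑ w y = 0` with some `w y > 0`. If exactly one point `u` has positive weight,
`u` lies in the hull of the other points and may be dropped. Otherwise pick two points `u ≠ v` of
positive weight and let `z = (w u • u + w v • v) / (w u + w v)`, a point of the open segment `uv`.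
Then `conv t` is the union of `conv (t - v + z)` and `conv (t - u + z)`, which meet in
`conv (t - u - v + z)`, and on each half the relation survives with `z` in place of `u, v`, so one
fewer point has positive weight. A double induction (on `#t`, then on the number of positive
weights) therefore builds every polytope from simplices by gluing two polytopes along a polytope,
and the valuation identity carries the agreement of `μ₁` and `μ₂` through every gluing.
-/

section Geometry

variable {E : Type*} [AddCommGroup E] [Module ℝ E]

theorem segment_subset_union_of_mem {u v z : E} (hz : z ∈ segment ℝ u v) :
    segment ℝ u v ⊆ segment ℝ u z ∪ segment ℝ z v := by
  intro x hx
  rw [mem_segment_iff_wbtw] at hz hx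
  rw [mem_union, mem_segment_iff_wbtw, mem_segment_iff_wbtw]
  have hray : SameRay ℝ (x -ᵥ u) (z -ᵥ u) :=
    hx.sameRay_vsub_left.trans hz.sameRay_vsub_left.symm fun hvu => by
      rw [vsub_eq_zero_iff_eq] at hvu
      subst hvu
      exact Or.inl (vsub_eq_zero_iff_eq.2 ((wbtw_self_iff ℝ).1 hx))
  rcases wbtw_total_of_sameRay_vsub_left hray with h | h
  · exact Or.inl h
  · exact Or.inr (hx.trans_left_right h)

theorem convexJoin_segment_subset_union {C : Set E} (hC : Convex ℝ C) {u v z : E} (hzC : z ∈ C)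
    (hz : z ∈ segment ℝ u v) :
    convexJoin ℝ (segment ℝ u v) C ⊆ convexJoin ℝ {u} C ∪ convexJoin ℝ {v} C := by
  have hjoin : convexJoin ℝ {z} C ⊆ C := convexJoin_subset (singleton_subset_iff.2 hzC) le_rfl hC
  calc convexJoin ℝ (segment ℝ u v) C
      ⊆ convexJoin ℝ (segment ℝ u z ∪ segment ℝ v z) C :=
        convexJoin_mono_left (by simpa [segment_symm ℝ z v] using segment_subset_union_of_mem hz)
    _ ⊆ convexJoin ℝ {u} C ∪ convexJoin ℝ {v} C := by
      rw [convexJoin_union_left, ← convexJoin_singletons, ← convexJoin_singletons,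
        convexJoin_assoc, convexJoin_assoc]
      exact union_subset_union (convexJoin_mono_right hjoin) (convexJoin_mono_right hjoin)

theorem convexJoin_inter_convexJoin_subset {C : Set E} (hC : Convex ℝ C) {u v z : E}
    (hzC : z ∈ C) (hz : z ∈ openSegment ℝ u v) :
    convexJoin ℝ {u} C ∩ convexJoin ℝ {v} C ⊆ C := by
  rintro x ⟨hxu, hxv⟩
  simp only [mem_convexJoin, mem_singleton_iff, exists_eq_left] at hxu hxv
  obtain ⟨p, hp, a', a, ha', ha, haa, hxp⟩ := hxu
  obtain ⟨q, hq, b', b, hb', hb, hbb, hx⟩ := hxv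
  obtain ⟨α, β, hα, hβ, hαβ, rfl⟩ := hz
  set D := β * a' + α * b'
  -- Eliminating `u` and `v` against `z = α • u + β • v` writes `D • x` as a nonnegative
  -- combination of `z`, `q`, `p` with total weight `D`.
  have hcomb : D • x = (a' * b') • (α • u + β • v) + (β * a' * b) • q + (α * b' * a) • p := by
    linear_combination (norm := module) (α * b') • hxp.symm + (β * a') • hx.symm
  rcases (by positivity : 0 ≤ D).eq_or_lt with hD | hD
  · have ha'0 : a' = 0 := by nlinarith
    rw [← hxp, ha'0, zero_smul, zero_add, show a = 1 by linarith, one_smul]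
    exact hp
  · have hw : a' * b' + β * a' * b + α * b' * a = D := by
      linear_combination (α * b') * haa + (β * a') * hbb - (a' * b') * hαβ
    have hmem := hC.centerMass_mem (t := Finset.univ) (w := ![a' * b', β * a' * b, α * b' * a])
      (z := ![α • u + β • v, q, p]) (by intro i _; fin_cases i <;> simp <;> positivity)
      (by simpa [Fin.sum_univ_three, hw] using hD) (by intro i _; fin_cases i <;> simpa)
    rw [← inv_smul_smul₀ hD.ne' x, hcomb]
    simpa [Finset.centerMass, Fin.sum_univ_three, hw, add_assoc] using hmem

theorem convexHull_insert_insert_eq_union {S : Set E} {u v z : E} (hz : z ∈ segment ℝ u v) :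
    convexHull ℝ (insert u (insert v S)) =
      convexHull ℝ (insert u (insert z S)) ∪ convexHull ℝ (insert v (insert z S)) := by
  have hzuv : z ∈ convexHull ℝ (insert u (insert v S)) :=
    convexHull_mono (insert_subset_insert (singleton_subset_iff.2 (mem_insert v S)))
      (by rwa [convexHull_pair])
  have hne : (insert z S).Nonempty := insert_nonempty z S
  apply Subset.antisymm
  · calc convexHull ℝ (insert u (insert v S))
        ⊆ convexHull ℝ (insert u (insert v (insert z S))) :=
          convexHull_mono (insert_subset_insert (insert_subset_insert (subset_insert z S)))
      _ = convexJoin ℝ (segment ℝ u v) (convexHull ℝ (insert z S)) := by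
          rw [convexHull_insert (insert_nonempty _ _), convexHull_insert hne, ← convexJoin_assoc,
            convexJoin_singletons]
      _ ⊆ _ := by
          rw [convexHull_insert hne, convexHull_insert hne]
          exact convexJoin_segment_subset_union (convex_convexHull ℝ _) (subset_convexHull ℝ _
            (mem_insert z S)) hz
  · refine union_subset (convexHull_min ?_ (convex_convexHull ℝ _))
      (convexHull_min ?_ (convex_convexHull ℝ _)) <;>
    refine insert_subset (subset_convexHull ℝ _ (by simp)) (insert_subset hzuv ?_) <;>
    exact (subset_insert _ _).trans ((subset_insert _ _).trans (subset_convexHull ℝ _))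

theorem convexHull_insert_inter_convexHull_insert {S : Set E} {u v z : E}
    (hz : z ∈ openSegment ℝ u v) :
    convexHull ℝ (insert u (insert z S)) ∩ convexHull ℝ (insert v (insert z S)) =
      convexHull ℝ (insert z S) := by
  have hne : (insert z S).Nonempty := insert_nonempty z S
  apply Subset.antisymm
  · rw [convexHull_insert hne, convexHull_insert hne]
    exact convexJoin_inter_convexJoin_subset (convex_convexHull ℝ _)
      (subset_convexHull ℝ _ (mem_insert z S)) hz
  · exact subset_inter (convexHull_mono (subset_insert _ _)) (convexHull_mono (subset_insert _ _))

theorem convexHull_insert_eq_of_mem {S : Set E} {u : E} (hu : u ∈ convexHull ℝ S) :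
    convexHull ℝ (insert u S) = convexHull ℝ S :=
  (convexHull_min (insert_subset hu (subset_convexHull ℝ S)) (convex_convexHull ℝ S)).antisymm
    (convexHull_mono (subset_insert u S))

end Geometry

section Relations

open Finset

theorem card_filter_pos_update_lt {α : Type*} {s : Finset α} {w : α → ℝ} {u v z : α} (hu : u ∈ s)
    (hv : v ∈ s) (huv : u ≠ v) (hwu : 0 < w u) (hwv : 0 < w v) :
    #{y ∈ insert z ((s.erase u).erase v) | 0 < Function.update w z (w u + w v) y} <
      #{y ∈ s | 0 < w y} := by
  set pos := {y ∈ s | 0 < w y}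
  have hsub : {y ∈ insert z ((s.erase u).erase v) | 0 < Function.update w z (w u + w v) y} ⊆
      insert z ((pos.erase u).erase v) := by
    intro y hy
    rw [mem_filter, Finset.mem_insert] at hy
    by_cases hyz : y = z
    · exact hyz ▸ mem_insert_self _ _
    obtain ⟨hy | hy, hpos⟩ := hy
    · exact absurd hy hyz
    rw [Function.update_of_ne hyz] at hpos
    simp only [mem_erase] at hy
    exact mem_insert_of_mem (by simp [pos, hy, hpos])
  have hvu : v ∈ pos.erase u := by simp [pos, huv.symm, hv, hwv]
  calc _ ≤ #(insert z ((pos.erase u).erase v)) := card_le_card hsub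
    _ ≤ #((pos.erase u).erase v) + 1 := card_insert_le _ _
    _ = #(pos.erase u) := by rw [card_erase_of_mem hvu]; have := card_pos.2 ⟨v, hvu⟩; omega
    _ < #pos := card_erase_lt_of_mem (by simp [pos, hu, hwu])

variable {E : Type*} [AddCommGroup E] [Module ℝ E]

def IsAffineRelation (s : Finset E) (w : E → ℝ) : Prop :=
  ∑ y ∈ s, w y = 0 ∧ ∑ y ∈ s, w y • y = 0

theorem IsAffineRelation.mem_convexHull_erase {s : Finset E} {w : E → ℝ}
    (hw : IsAffineRelation s w) {u : E} (hu : u ∈ s) (hwu : 0 < w u)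
    (hle : ∀ y ∈ s, y ≠ u → w y ≤ 0) : u ∈ convexHull ℝ ↑(s.erase u) := by
  have hcenter : ({u} : Finset E).centerMass w id = (s.erase u).centerMass w id :=
    centerMass_of_sum_add_sum_eq_zero (by rw [sum_singleton, add_sum_erase _ _ hu, hw.1])
      (by simpa only [sum_singleton, id, add_sum_erase _ (fun y => w y • y) hu] using hw.2)
  rw [centerMass_singleton _ _ hwu.ne', id] at hcenter
  have hmem := (s.erase u).centerMass_mem_convexHull_of_nonpos
    (fun y hy => hle y (mem_of_mem_erase hy) (ne_of_mem_erase hy))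
    (by linarith [add_sum_erase s w hu, hw.1]) (fun y hy => hy) (z := id)
  rwa [← hcenter] at hmem

theorem IsAffineRelation.merge {s : Finset E} {w : E → ℝ} (hw : IsAffineRelation s w)
    {u v z : E} (hu : u ∈ s) (hv : v ∈ s) (huv : u ≠ v) (hz : z ∉ s)
    (hzuv : (w u + w v) • z = w u • u + w v • v) :
    IsAffineRelation (insert z ((s.erase u).erase v)) (Function.update w z (w u + w v)) := by
  have hzR : z ∉ (s.erase u).erase v := fun h => hz (mem_of_mem_erase (mem_of_mem_erase h))
  have hvR : v ∈ s.erase u := mem_erase.2 ⟨huv.symm, hv⟩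
  have hupd : ∀ y ∈ (s.erase u).erase v, Function.update w z (w u + w v) y = w y :=
    fun y hy => Function.update_of_ne (ne_of_mem_of_not_mem hy hzR) _ _
  rw [IsAffineRelation, sum_insert hzR, sum_insert hzR, Function.update_self, sum_congr rfl hupd,
    sum_congr rfl fun y hy => congrArg (· • y) (hupd y hy), hzuv]
  constructor
  · rw [← hw.1, ← add_sum_erase _ _ hu, ← add_sum_erase _ _ hvR]
    ring
  · rw [← hw.2, ← add_sum_erase _ _ hu, ← add_sum_erase _ _ hvR]
    abel

def IsStableUnderGluing (P : Set E → Prop) : Prop :=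
  ∀ A B C D : Finset E, A.Nonempty → B.Nonempty → C.Nonempty → D.Nonempty →
    convexHull ℝ (A : Set E) ∪ convexHull ℝ (B : Set E) = convexHull ℝ (D : Set E) →
    convexHull ℝ (A : Set E) ∩ convexHull ℝ (B : Set E) = convexHull ℝ (C : Set E) →
    P (convexHull ℝ (A : Set E)) → P (convexHull ℝ (B : Set E)) → P (convexHull ℝ (C : Set E)) →
    P (convexHull ℝ (D : Set E))

theorem IsStableUnderGluing.of_mem_openSegment {P : Set E → Prop} (hP : IsStableUnderGluing P)
    {t : Finset E} {u v z : E} (hu : u ∈ t) (hv : v ∈ t) (huv : u ≠ v)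
    (hz : z ∈ openSegment ℝ u v)
    (hC : P (convexHull ℝ ↑(insert z ((t.erase u).erase v))))
    (hA : P (convexHull ℝ ↑(insert u (insert z ((t.erase u).erase v)))))
    (hB : P (convexHull ℝ ↑(insert v (insert z ((t.erase u).erase v))))) :
    P (convexHull ℝ ↑t) := by
  rw [← insert_erase hu, ← insert_erase (mem_erase.2 ⟨huv.symm, hv⟩)]
  refine hP _ _ _ _ (insert_nonempty _ _) (insert_nonempty _ _) (insert_nonempty _ _)
    (insert_nonempty _ _) ?_ ?_ hA hB hC
  · push_cast
    exact (convexHull_insert_insert_eq_union (openSegment_subset_segment ℝ u v hz)).symm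
  · push_cast
    exact convexHull_insert_inter_convexHull_insert hz

theorem convexHull_induction_of_relation {P : Set E → Prop} (hP : IsStableUnderGluing P)
    (t : Finset E) (ih : ∀ r : Finset E, r.Nonempty → #r < #t → P (convexHull ℝ ↑r))
    {s : Finset E} (hst : s ⊆ t) {w : E → ℝ} (hw : IsAffineRelation s w)
    (hpos : ∃ y ∈ s, 0 < w y) : P (convexHull ℝ ↑t) := by
  induction hk : #{y ∈ s | 0 < w y} using Nat.strong_induction_on generalizing t s w with
  | _ k IH =>
  rcases le_or_gt k 1 with hk1 | hk1
  · obtain ⟨u, hus, hwu⟩ := hpos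
    have hle : ∀ y ∈ s, y ≠ u → w y ≤ 0 := fun y hy hyu => not_lt.1 fun hwy =>
      hyu (card_le_one.1 (hk ▸ hk1) y (mem_filter.2 ⟨hy, hwy⟩) u (mem_filter.2 ⟨hus, hwu⟩))
    have hut := hst hus
    have hu : u ∈ convexHull ℝ ↑(t.erase u) :=
      convexHull_mono (coe_subset.2 (erase_subset_erase u hst))
        (hw.mem_convexHull_erase hus hwu hle)
    rw [← insert_erase hut, coe_insert, convexHull_insert_eq_of_mem hu]
    exact ih _ (coe_nonempty.1 (convexHull_nonempty_iff.1 ⟨u, hu⟩)) (card_erase_lt_of_mem hut)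
  obtain ⟨u, hu, v, hv, huv⟩ := one_lt_card.1 (hk ▸ hk1)
  rw [mem_filter] at hu hv
  set S := (t.erase u).erase v
  set z := (w u / (w u + w v)) • u + (w v / (w u + w v)) • v
  have hz : z ∈ openSegment ℝ u v := mem_openSegment_iff_div.2 ⟨_, _, hu.2, hv.2, rfl⟩
  have hzuv : (w u + w v) • z = w u • u + w v • v := by
    have : w u + w v ≠ 0 := (add_pos hu.2 hv.2).ne'
    simp only [z, smul_add, smul_smul, mul_div_cancel₀ _ this]
  have hvt : v ∈ t.erase u := mem_erase.2 ⟨huv.symm, hst hv.1⟩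
  have hcardS : #S + 2 = #t := by
    have h₁ : #S = #(t.erase u) - 1 := card_erase_of_mem hvt
    have h₂ := card_erase_of_mem (hst hu.1)
    have h₃ := card_pos.2 ⟨v, hvt⟩
    omega
  -- If `z ∈ t`, each half has fewer points than `t`; otherwise the merged relation has fewer
  -- positive weights.
  have hpiece : ∀ p, P (convexHull ℝ ↑(insert p (insert z S))) := by
    intro p
    by_cases hzt : z ∈ t
    · have hzS : z ∈ S := by
        refine mem_erase.2 ⟨fun h => huv ?_, mem_erase.2 ⟨fun h => huv ?_, hzt⟩⟩
        · exact right_mem_openSegment_iff.1 (h ▸ hz)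
        · exact left_mem_openSegment_iff.1 (h ▸ hz)
      rw [Finset.insert_eq_of_mem hzS]
      exact ih _ (insert_nonempty _ _) (by have := card_insert_le p S; omega)
    have hcard : #(insert p (insert z S)) ≤ #t :=
      (card_insert_le _ _).trans (by have := card_insert_le z S; omega)
    exact IH _ (hk ▸ card_filter_pos_update_lt hu.1 hv.1 huv hu.2 hv.2) _
      (fun r hr hrt => ih r hr (hrt.trans_le hcard))
      ((insert_subset_insert z (erase_subset_erase v (erase_subset_erase u hst))).trans
        (subset_insert p _)) (hw.merge hu.1 hv.1 huv (fun h => hzt (hst h)) hzuv)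
      ⟨z, mem_insert_self _ _, by rw [Function.update_self]; exact add_pos hu.2 hv.2⟩ rfl
  have hC : P (convexHull ℝ ↑(insert z S)) :=
    ih _ (insert_nonempty _ _) (by have := card_insert_le z S; omega)
  exact hP.of_mem_openSegment (hst hu.1) (hst hv.1) huv hz hC (hpiece u) (hpiece v)

theorem convexHull_induction {P : Set E → Prop}
    (hsimplex : ∀ t : Finset E, t.Nonempty → AffineIndependent ℝ ((↑) : t → E) →
      P (convexHull ℝ ↑t))
    (hP : IsStableUnderGluing P) {t : Finset E} (ht : t.Nonempty) : P (convexHull ℝ ↑t) := by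
  induction hk : #t using Nat.strong_induction_on generalizing t with
  | _ k ih =>
  by_cases hind : AffineIndependent ℝ ((↑) : t → E)
  · exact hsimplex t ht hind
  obtain ⟨w, hvec, hsum, hw⟩ := exists_nontrivial_relation_sum_zero_of_not_affine_ind hind
  exact convexHull_induction_of_relation hP t (fun r hr hrt => ih _ (hk ▸ hrt) hr rfl)
    subset_rfl ⟨hsum, hvec⟩ (exists_pos_of_sum_zero_of_exists_nonzero w hsum hw)

end Relations

section Valuation

variable {N n : ℕ}

theorem sdim_mono {s u : Set (Euc N)} (h : s ⊆ u) : sdim s ≤ sdim u :=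
  Submodule.finrank_mono (vectorSpan_mono ℝ h)

theorem isSimplex_convexHull {t : Finset (Euc N)} (ht : t.Nonempty)
    (hind : AffineIndependent ℝ ((↑) : t → Euc N)) :
    IsSimplex (t.card - 1) (convexHull ℝ (t : Set (Euc N))) ∧
      sdim (convexHull ℝ (t : Set (Euc N))) = t.card - 1 := by
  let e : Fin (t.card - 1 + 1) ≃ t :=
    (finCongr (Nat.sub_add_cancel ht.card_pos)).trans t.equivFin.symm
  have hv : AffineIndependent ℝ ((↑) ∘ e : _ → Euc N) := hind.comp_embedding e.toEmbedding
  have hrange : range ((↑) ∘ e : _ → Euc N) = ↑t := by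
    rw [e.surjective.range_comp, Subtype.range_coe]
  refine ⟨⟨_, hv, by rw [hrange]⟩, ?_⟩
  rw [sdim, ← direction_affineSpan, affineSpan_convexHull, direction_affineSpan, ← hrange]
  exact hv.finrank_vectorSpan (Fintype.card_fin _)

theorem isStableUnderGluing_of_isValuation {μ₁ μ₂ : Set (Euc N) → ℝ}
    (h₁ : IsValuation (polytopeClass N n) μ₁) (h₂ : IsValuation (polytopeClass N n) μ₂) :
    IsStableUnderGluing fun X => sdim X ≤ n → μ₁ X = μ₂ X := by
  intro A B C D hA hB hC hD hunion hinter hPA hPB hPC hdim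
  set hull : Finset (Euc N) → Set (Euc N) := fun F => convexHull ℝ (F : Set (Euc N))
  replace hunion : hull A ∪ hull B = hull D := hunion
  replace hinter : hull A ∩ hull B = hull C := hinter
  have hle : ∀ F, hull F ⊆ hull D → sdim (hull F) ≤ n := fun F hF => (sdim_mono hF).trans hdim
  have hmem : ∀ F : Finset (Euc N), F.Nonempty → hull F ⊆ hull D → hull F ∈ polytopeClass N n :=
    fun F hF hFD => Or.inr ⟨⟨F, hF, rfl⟩, hle F hFD⟩
  have hAD : hull A ⊆ hull D := hunion ▸ subset_union_left
  have hBD : hull B ⊆ hull D := hunion ▸ subset_union_right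
  have hCD : hull C ⊆ hull D := hinter ▸ inter_subset_left.trans hAD
  have hU : hull A ∪ hull B ∈ polytopeClass N n := hunion ▸ hmem D hD subset_rfl
  have hI : hull A ∩ hull B ∈ polytopeClass N n := hinter ▸ hmem C hC hCD
  have e₁ := h₁.2 _ (hmem A hA hAD) _ (hmem B hB hBD) hU hI
  have e₂ := h₂.2 _ (hmem A hA hAD) _ (hmem B hB hBD) hU hI
  rw [hunion, hinter] at e₁ e₂
  linarith [hPA (hle A hAD), hPB (hle B hBD), hPC (hle C hCD)]

end Valuation

/-- two valuations on polytopes of dimension at most `n` that agree on all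
simplices of dimension at most `n` agree on all such polytopes. -/
theorem valuations_agree_on_polytopes {N n : ℕ} (μ₁ μ₂ : Set (Euc N) → ℝ)
    (h₁ : IsValuation (polytopeClass N n) μ₁) (h₂ : IsValuation (polytopeClass N n) μ₂)
    (hagree : ∀ A ∈ simplexClass N n, μ₁ A = μ₂ A) :
    ∀ A ∈ polytopeClass N n, μ₁ A = μ₂ A := by
  rintro A (rfl | ⟨⟨t, ht, rfl⟩, hdim⟩)
  · exact hagree ∅ (Or.inl rfl)
  refine convexHull_induction (P := fun X => sdim X ≤ n → μ₁ X = μ₂ X) (fun s hs hind hsdim => ?_)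
    (isStableUnderGluing_of_isValuation h₁ h₂) ht hdim
  obtain ⟨hsimplex, hsd⟩ := isSimplex_convexHull hs hind
  exact hagree _ (Or.inr ⟨_, hsd ▸ hsdim, hsimplex⟩)
end
end

section
/- If an n-simplex T in R^N is dissected by a hyperplane H containing an (n−2)-dimensional face of T and meeting the interior of T, then T ∩ H⁺ and T ∩ H⁻ are both n-simplices, where H⁺ and H⁻ are the two closed halfspaces bounded by H. -/
open Set MeasureTheory
open scoped Classical
noncomputable section

/-!
At most two vertices `v m`, `v j` of `T` lie off `H = {f = c}`. If none lies strictly above `H`,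
then `T ∩ H⁻ = T`. If `v j` does, then some `v m` lies strictly below, since pushing a point of `H`
in the relative interior slightly away from `v j` stays in `T`. Now `T ∩ H⁻` is the simplex
obtained from `T` by replacing `v j` with the point `p` where the edge `[v m, v j]` crosses `H`.
Indeed `T` is the join of that edge with the face spanned by the vertices in `H`, and a point of a
segment from the edge to that face lies below `H` only if its end on the edge does, i.e. lies in
`[v m, p]`. Replacing a vertex by a point of an edge through it keeps the vertices affinely
independent. The other half is the same statement for `-f` and `-c`.
-/

open AffineMap Function

theorem Set.range_eq_pair_union_image {ι α : Type*} (w : ι → α) (m j : ι) :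
    range w = {w m, w j} ∪ w '' {k | k ≠ m ∧ k ≠ j} := by
  apply Subset.antisymm
  · rintro _ ⟨k, rfl⟩
    by_cases hkm : k = m
    · exact Or.inl (Or.inl (congrArg w hkm))
    by_cases hkj : k = j
    · exact Or.inl (Or.inr (congrArg w hkj))
    exact Or.inr ⟨k, ⟨hkm, hkj⟩, rfl⟩
  · rintro _ ((rfl | rfl) | ⟨k, -, rfl⟩) <;> exact mem_range_self _

section Cut

variable {𝕜 E : Type*} [Field 𝕜] [LinearOrder 𝕜] [IsStrictOrderedRing 𝕜] [AddCommGroup E]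
  [Module 𝕜 E] (f : E →ₗ[𝕜] 𝕜) (c : 𝕜)

theorem segment_inter_halfSpace_le {a b : E} (ha : f a < c) (hb : c ≤ f b) :
    segment 𝕜 a b ∩ {x | f x ≤ c} =
      segment 𝕜 a (lineMap a b ((c - f a) / (f b - f a))) := by
  have hf_lineMap : ∀ t, f (lineMap a b t) = f a + t * (f b - f a) := fun t => by
    rw [lineMap_apply_module', map_add, map_smul, map_sub, smul_eq_mul, add_comm]
  set τ := (c - f a) / (f b - f a)
  have hτ₀ : 0 < τ := div_pos (by linarith) (by linarith)
  have hτ₁ : τ ≤ 1 := (div_le_one (by linarith)).2 (by linarith)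
  have hfp : f (lineMap a b τ) = c := by
    rw [hf_lineMap, div_mul_cancel₀ _ (by linarith : f b - f a ≠ 0)]
    ring
  apply Subset.antisymm
  · rintro _ ⟨hx, hfx⟩
    rw [segment_eq_image_lineMap] at hx
    obtain ⟨t, ⟨ht₀, -⟩, rfl⟩ := hx
    have htτ : t ≤ τ := by
      rw [mem_ofPred_eq, hf_lineMap] at hfx
      rw [le_div_iff₀ (by linarith)]
      linarith
    rw [segment_eq_image_lineMap]
    refine ⟨t / τ, ⟨div_nonneg ht₀ hτ₀.le, (div_le_one hτ₀).2 htτ⟩, ?_⟩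
    rw [lineMap_lineMap_right, div_mul_cancel₀ _ hτ₀.ne']
  · refine ((convex_segment a b).inter (convex_halfSpace_le f.isLinear c)).segment_subset
      ⟨left_mem_segment 𝕜 a b, ha.le⟩ ⟨lineMap_mem_segment 𝕜 a b ⟨hτ₀.le, hτ₁⟩, hfp.le⟩

theorem convexHull_union_inter_halfSpace_le {S K : Set E} (hK : K ⊆ {x | f x = c}) :
    convexHull 𝕜 (S ∪ K) ∩ {x | f x ≤ c} =
      convexHull 𝕜 ((convexHull 𝕜 S ∩ {x | f x ≤ c}) ∪ K) := by
  apply Subset.antisymm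
  · rcases S.eq_empty_or_nonempty with rfl | hS
    · rw [empty_union]
      exact inter_subset_left.trans (convexHull_mono subset_union_right)
    rcases K.eq_empty_or_nonempty with rfl | hK'
    · rw [union_empty, union_empty]
      exact subset_convexHull 𝕜 _
    rintro x ⟨hx, hfx⟩
    rw [convexHull_union hS hK', mem_convexJoin] at hx
    obtain ⟨y, hy, r, hr, hxyr⟩ := hx
    have hfr : f r = c := convexHull_min hK (convex_hyperplane f.isLinear c) hr
    set R := convexHull 𝕜 ((convexHull 𝕜 S ∩ {x | f x ≤ c}) ∪ K)
    have hr' : r ∈ R := convexHull_mono subset_union_right hr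
    by_cases hfy : f y ≤ c
    · have hy' : y ∈ R := subset_convexHull 𝕜 _ (mem_union_left K ⟨hy, hfy⟩)
      exact (convex_convexHull 𝕜 _).segment_subset hy' hr' hxyr
    -- as `c < f y` and `f r = c`, every point of the segment other than `r` lies above `f = c`
    obtain ⟨α, β, hα, hβ, hαβ, rfl⟩ := hxyr
    have hα0 : α = 0 := by
      by_contra hα0
      have : c < f (α • y + β • r) := by
        rw [map_add, map_smul, map_smul, smul_eq_mul, smul_eq_mul, hfr]
        have hdiff : α * f y + β * c - c = α * (f y - c) := by linear_combination c * hαβ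
        have := mul_pos (lt_of_le_of_ne hα (Ne.symm hα0)) (sub_pos.2 (not_le.1 hfy))
        linarith
      exact absurd hfx (not_le.2 this)
    rw [hα0, (by linarith : β = 1), zero_smul, one_smul, zero_add]
    exact hr'
  · refine convexHull_min (union_subset ?_ ?_)
      ((convex_convexHull 𝕜 _).inter (convex_halfSpace_le f.isLinear c))
    · exact inter_subset_inter_left _ (convexHull_mono subset_union_left)
    · exact fun x hx => ⟨subset_convexHull 𝕜 _ (Or.inr hx), (hK hx).le⟩

theorem convexHull_range_inter_halfSpace_le {ι : Type*} [DecidableEq ι] (v : ι → E) {m j : ι}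
    (hm : f (v m) < c) (hj : c ≤ f (v j)) (hrest : ∀ k, k ≠ m → k ≠ j → f (v k) = c) :
    convexHull 𝕜 (range v) ∩ {x | f x ≤ c} = convexHull 𝕜
      (range (update v j (lineMap (v m) (v j) ((c - f (v m)) / (f (v j) - f (v m)))))) := by
  have hmj : m ≠ j := by rintro rfl; linarith
  set p := lineMap (v m) (v j) ((c - f (v m)) / (f (v j) - f (v m)))
  have hK : v '' {k | k ≠ m ∧ k ≠ j} ⊆ {x | f x = c} := by
    rintro _ ⟨k, hk, rfl⟩
    exact hrest k hk.1 hk.2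
  have hu : update v j p '' {k | k ≠ m ∧ k ≠ j} = v '' {k | k ≠ m ∧ k ≠ j} :=
    image_congr fun k hk => update_of_ne hk.2 _ _
  rw [range_eq_pair_union_image v m j, range_eq_pair_union_image (update v j p) m j, hu,
    update_self, update_of_ne hmj, convexHull_union_inter_halfSpace_le f c hK, convexHull_pair,
    segment_inter_halfSpace_le f c hm hj, ← convexHull_pair, convexHull_convexHull_union_left]

end Cut

theorem AffineIndependent.update_lineMap {k V P ι : Type*} [Ring k] [AddCommGroup V]
    [Module k V] [AddTorsor V P] [DecidableEq ι] {v : ι → P} (hv : AffineIndependent k v)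
    (i j : ι) {t : k} (ht : IsUnit t) :
    AffineIndependent k (update v j (lineMap (v i) (v j) t)) := by
  convert hv.units_lineMap i (update 1 j ht.unit) using 1
  funext l
  by_cases hl : l = j
  · subst hl
    simp
  · simp [hl]

theorem exists_lineMap_mem_of_mem_intrinsicInterior {V : Type*} [AddCommGroup V] [Module ℝ V]
    [TopologicalSpace V] [IsTopologicalAddGroup V] [ContinuousSMul ℝ V] {S : Set V} {x y : V}
    (hx : x ∈ intrinsicInterior ℝ S) (hy : y ∈ S) : ∃ t : ℝ, 1 < t ∧ lineMap y x t ∈ S := by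
  obtain ⟨x', hx', rfl⟩ := hx
  let g : ℝ → affineSpan ℝ S := fun t =>
    ⟨lineMap y x' t, AffineMap.lineMap_mem _ (subset_affineSpan ℝ S hy) x'.2⟩
  have hg : Continuous g := by
    apply Continuous.subtype_mk
    fun_prop
  have hg1 : g 1 = x' := Subtype.ext (lineMap_apply_one _ _)
  have hev : ∀ᶠ t in nhds 1, g t ∈ interior ((↑) ⁻¹' S : Set (affineSpan ℝ S)) :=
    hg.continuousAt.eventually_mem (hg1 ▸ isOpen_interior.mem_nhds hx')
  obtain ⟨t, ht, ht1⟩ := ((hev.filter_mono nhdsWithin_le_nhds).and self_mem_nhdsWithin).exists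
    (f := nhdsWithin 1 (Ioi 1))
  exact ⟨t, ht1, (interior_subset ht : g t ∈ ((↑) ⁻¹' S : Set (affineSpan ℝ S)))⟩

theorem exists_lt_of_mem_intrinsicInterior_convexHull {V : Type*} [AddCommGroup V] [Module ℝ V]
    [TopologicalSpace V] [IsTopologicalAddGroup V] [ContinuousSMul ℝ V] (f : V →ₗ[ℝ] ℝ) {c : ℝ}
    {S : Set V} {x y : V} (hx : x ∈ intrinsicInterior ℝ (convexHull ℝ S)) (hfx : f x = c)
    (hy : y ∈ S) (hfy : c < f y) : ∃ z ∈ S, f z < c := by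
  by_contra! h
  obtain ⟨t, ht, hmem⟩ :=
    exists_lineMap_mem_of_mem_intrinsicInterior hx (subset_convexHull ℝ S hy)
  have hft : c ≤ f (lineMap y x t) := convexHull_min h (convex_halfSpace_ge f.isLinear c) hmem
  rw [lineMap_apply_module', map_add, map_smul, map_sub, smul_eq_mul, hfx] at hft
  nlinarith

theorem Finset.mem_or_eq_or_eq_of_card_le_add_two {ι : Type*} [Fintype ι] [DecidableEq ι]
    {s : Finset ι} (hs : Fintype.card ι ≤ s.card + 2) {m j : ι} (hmj : m ≠ j) (hm : m ∉ s)
    (hj : j ∉ s) (k : ι) : k ∈ s ∨ k = m ∨ k = j := by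
  have huniv : insert m (insert j s) = Finset.univ := by
    refine Finset.eq_univ_of_card _ (le_antisymm (Finset.card_le_univ _) ?_)
    rw [Finset.card_insert_of_notMem (by simp [hmj, hm]), Finset.card_insert_of_notMem hj]
    exact hs
  have hk := huniv ▸ Finset.mem_univ k
  simp only [Finset.mem_insert] at hk
  tauto

theorem isSimplex_convexHull_inter_halfSpace_le {N n : ℕ} {v : Fin (n + 1) → Euc N}
    (hv : AffineIndependent ℝ v) (f : Euc N →ₗ[ℝ] ℝ) (c : ℝ) {s : Finset (Fin (n + 1))}
    (hs : s.card = n - 1) (hface : ∀ i ∈ s, f (v i) = c)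
    (hint : ∃ x ∈ intrinsicInterior ℝ (convexHull ℝ (range v)), f x = c) :
    IsSimplex n (convexHull ℝ (range v) ∩ {x | f x ≤ c}) := by
  by_cases hall : ∀ k, f (v k) ≤ c
  · rw [inter_eq_left.2 (convexHull_min (range_subset_iff.2 hall)
      (convex_halfSpace_le f.isLinear c))]
    exact ⟨v, hv, rfl⟩
  push Not at hall
  obtain ⟨j, hj⟩ := hall
  obtain ⟨x, hx, hfx⟩ := hint
  obtain ⟨_, ⟨m, rfl⟩, hm⟩ :=
    exists_lt_of_mem_intrinsicInterior_convexHull f hx hfx (mem_range_self j) hj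
  have hmj : m ≠ j := by rintro rfl; linarith
  have hrest : ∀ k, k ≠ m → k ≠ j → f (v k) = c := by
    intro k hkm hkj
    rcases s.mem_or_eq_or_eq_of_card_le_add_two (by simp only [Fintype.card_fin]; omega) hmj
      (fun h => hm.ne (hface m h)) (fun h => hj.ne' (hface j h)) k with hk | rfl | rfl
    exacts [hface k hk, absurd rfl hkm, absurd rfl hkj]
  have ht : IsUnit ((c - f (v m)) / (f (v j) - f (v m))) :=
    (div_pos (sub_pos.2 hm) (by linarith)).ne'.isUnit
  exact ⟨_, hv.update_lineMap m j ht, convexHull_range_inter_halfSpace_le f c v hm hj.le hrest⟩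

theorem hyperplane_dissects_simplex_general {N n : ℕ} (T : Set (Euc N))
    (v : Fin (n + 1) → Euc N) (hv : AffineIndependent ℝ v)
    (hT : T = convexHull ℝ (Set.range v))
    (f : Euc N →ₗ[ℝ] ℝ) (c : ℝ)
    (s : Finset (Fin (n + 1))) (hs : s.card = n - 1) (hface : ∀ i ∈ s, f (v i) = c)
    (hint : ∃ x ∈ intrinsicInterior ℝ T, f x = c) :
    IsSimplex n (T ∩ {x | f x ≤ c}) ∧ IsSimplex n (T ∩ {x | c ≤ f x}) := by
  subst hT
  refine ⟨isSimplex_convexHull_inter_halfSpace_le hv f c hs hface hint, ?_⟩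
  have hneg := isSimplex_convexHull_inter_halfSpace_le hv (-f) (-c) hs
    (fun i hi => by simp [hface i hi]) (hint.imp fun _ ⟨hx, hfx⟩ => ⟨hx, by simp [hfx]⟩)
  simpa using hneg

/-- a hyperplane through an `(n-2)`-face of an `n`-simplex meeting its
relative interior dissects it into two `n`-simplices. -/
theorem hyperplane_dissects_simplex {N n : ℕ} (T : Set (Euc N))
    (v : Fin (n + 1) → Euc N) (hv : AffineIndependent ℝ v)
    (hT : T = convexHull ℝ (Set.range v))
    (f : Euc N →ₗ[ℝ] ℝ) (hf : f ≠ 0) (c : ℝ)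
    (s : Finset (Fin (n + 1))) (hs : s.card = n - 1) (hface : ∀ i ∈ s, f (v i) = c)
    (hint : ∃ x ∈ intrinsicInterior ℝ T, f x = c) :
    IsSimplex n (T ∩ {x | f x ≤ c}) ∧ IsSimplex n (T ∩ {x | c ≤ f x}) :=
  hyperplane_dissects_simplex_general T v hv hT f c s hs hface hint
end
end
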